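/- Suppose α₁,…,α_d,1 are linearly independent over ℚ and let L_ν be the values of the linear form at the best approximation vectors of α=(α₁,…,α_d) in the sense of the linear form. Then α is badly approximable if and only if inf_{j≥1} L_{j+1}/L_j > 0. -/
import Mathlib

set_option maxHeartbeats 1000000


/-- Distance from a real number to the nearest integer. -/
noncomputable def dist01 (x : ℝ) : ℝ := |x - (round x : ℝ)|

/-- `max_{1 ≤ j ≤ d} ‖q α_j‖`. -/
noncomputable def simErr (d : ℕ) (α : Fin d → ℝ) (q : ℕ) : ℝ :=
  ⨆ j : Fin d, dist01 ((q : ℝ) * α j)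

/-- `α` is badly approximable: `inf_{q ∈ ℤ₊} q^{1/d} max_j ‖q α_j‖ > 0`. -/
def IsBadlyApprox (d : ℕ) (α : Fin d → ℝ) : Prop :=
  ∃ c : ℝ, 0 < c ∧ ∀ m : ℕ, 0 < m → c ≤ (m : ℝ) ^ ((1 : ℝ) / d) * simErr d α m

/-- Height `M = max_{1 ≤ j ≤ d} |m_j|` of an integer vector `(m_0, m_1, …, m_d)`. -/
def lfHeight (d : ℕ) (m : Fin (d + 1) → ℤ) : ℕ :=
  Finset.univ.sup fun j : Fin d => (m j.succ).natAbs

/-- Value `L = |m_0 + m_1 α_1 + ⋯ + m_d α_d|` of the linear form at `(m_0, m_1, …, m_d)`. -/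
noncomputable def lfValue (d : ℕ) (α : Fin d → ℝ) (m : Fin (d + 1) → ℤ) : ℝ :=
  |(m 0 : ℝ) + ∑ j : Fin d, (m j.succ : ℝ) * α j|

/-- `m` enumerates the best approximation vectors of `α` in the sense of the linear form:
heights `M_ν` strictly increase, values `L_ν` strictly decrease, `L_ν` beats every nonzero
integer vector of smaller height, and the sequence dominates every candidate vector. -/
def IsLinFormBestApprox (d : ℕ) (α : Fin d → ℝ) (m : ℕ → Fin (d + 1) → ℤ) : Prop :=
  StrictMono (fun ν => lfHeight d (m ν)) ∧
  StrictAnti (fun ν => lfValue d α (m ν)) ∧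
  (∀ ν, ∀ nv : Fin d → ℤ, nv ≠ 0 →
      (Finset.univ.sup fun j => (nv j).natAbs) < lfHeight d (m ν) →
      lfValue d α (m ν) < dist01 (∑ j : Fin d, (nv j : ℝ) * α j)) ∧
  (∀ nv : Fin (d + 1) → ℤ, (fun j : Fin d => nv j.succ) ≠ 0 →
      ∃ ν, lfHeight d (m ν) ≤ lfHeight d nv ∧ lfValue d α (m ν) ≤ lfValue d α nv)

lemma dist01_nonneg (x : ℝ) : 0 ≤ dist01 x := abs_nonneg _

lemma dist01_le_int (x : ℝ) (k : ℤ) : dist01 x ≤ |x - k| := by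
  by_cases h : k = round x
  · simp [dist01, h]
  · have h1 : (1:ℝ) ≤ |(k:ℝ) - (round x : ℝ)| := by
      have h0 : (1:ℤ) ≤ |k - round x| := Int.one_le_abs (sub_ne_zero.mpr h)
      have := (@Int.cast_le ℝ _ _ _).mpr h0
      push_cast at this
      simpa using this
    have h2 : dist01 x ≤ 1/2 := abs_sub_round x
    have h3 : |(k:ℝ) - (round x:ℝ)| ≤ |x - k| + |x - (round x:ℝ)| := by
      calc |(k:ℝ) - (round x:ℝ)| = |(x - (round x:ℝ)) - (x - k)| := by ring_nf
        _ ≤ |x - (round x:ℝ)| + |x - k| := abs_sub _ _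
        _ = |x - k| + |x - (round x:ℝ)| := by ring
    have : dist01 x ≤ 1/2 := h2
    unfold dist01 at *
    linarith

lemma simErr_le {d : ℕ} (hd : 0 < d) (α : Fin d → ℝ) (q : ℕ) {t : ℝ}
    (h : ∀ j, dist01 ((q:ℝ) * α j) ≤ t) : simErr d α q ≤ t := by
  have : Nonempty (Fin d) := ⟨⟨0, hd⟩⟩
  exact ciSup_le h

lemma le_simErr {d : ℕ} (α : Fin d → ℝ) (q : ℕ) (j : Fin d) :
    dist01 ((q:ℝ) * α j) ≤ simErr d α q :=
  le_ciSup (f := fun j : Fin d => dist01 ((q:ℝ) * α j)) (Set.Finite.bddAbove (Set.finite_range _)) j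

lemma simErr_nonneg {d : ℕ} (hd : 0 < d) (α : Fin d → ℝ) (q : ℕ) : 0 ≤ simErr d α q :=
  le_trans (dist01_nonneg _) (le_simErr α q ⟨0, hd⟩)

lemma dist01_pos_of_li {d : ℕ} {α : Fin d → ℝ}
    (hli : LinearIndependent ℚ (Fin.cons 1 α : Fin (d + 1) → ℝ))
    (j : Fin d) (q : ℕ) (hq : 0 < q) : 0 < dist01 ((q:ℝ) * α j) := by
  rcases (dist01_nonneg ((q:ℝ) * α j)).lt_or_eq with h | h
  · exact h
  exfalso
  have hz : (q:ℝ) * α j - (round ((q:ℝ) * α j) : ℝ) = 0 := by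
    have := abs_eq_zero.mp h.symm
    exact this
  set p : ℤ := round ((q:ℝ) * α j)
  set g : Fin (d+1) → ℚ := Fin.cons (-(p:ℚ)) (fun i => if i = j then (q:ℚ) else 0) with hg
  have hsum : ∑ i, g i • (Fin.cons 1 α : Fin (d+1) → ℝ) i = 0 := by
    rw [Fin.sum_univ_succ]
    simp only [hg, Fin.cons_zero, Fin.cons_succ]
    have : ∑ i : Fin d, ((if i = j then (q:ℚ) else 0) : ℚ) • α i = (q:ℝ) * α j := by
      rw [Finset.sum_eq_single j]
      · simp [Rat.smul_def]
      · intro b _ hb; simp [hb]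
      · intro hj; exact absurd (Finset.mem_univ j) hj
    rw [this]
    simp [Rat.smul_def]
    linarith [hz]
  have := Fintype.linearIndependent_iff.mp hli g hsum (Fin.succ j)
  simp [hg, Fin.cons_succ] at this
  omega

lemma abs_lt_one_of_floor_eq {a b : ℝ} (ha : 0 ≤ a) (hb : 0 ≤ b)
    (h : ⌊a⌋₊ = ⌊b⌋₊) : |a - b| < 1 := by
  have h1 := Nat.floor_le ha
  have h2 := Nat.lt_floor_add_one a
  have h3 := Nat.floor_le hb
  have h4 := Nat.lt_floor_add_one b
  rw [h] at h1 h2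
  rw [abs_sub_lt_iff]
  constructor <;> linarith

lemma dist01_sub_of_fract {x y : ℝ} {t : ℝ} (h : |Int.fract x - Int.fract y| ≤ t) :
    dist01 (x - y) ≤ t := by
  have h1 : (x - y) - ((⌊x⌋ : ℝ) - (⌊y⌋ : ℝ)) = Int.fract x - Int.fract y := by
    unfold Int.fract; push_cast; ring
  calc dist01 (x - y) ≤ |(x - y) - ((⌊x⌋ - ⌊y⌋ : ℤ) : ℝ)| := dist01_le_int _ _
    _ = |Int.fract x - Int.fract y| := by rw [← h1]; push_cast; ring_nf
    _ ≤ t := h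

lemma fract_close_of_nfloor_eq {x y : ℝ} {N : ℕ} (hN : 0 < N)
    (h : ⌊(N:ℝ) * Int.fract x⌋₊ = ⌊(N:ℝ) * Int.fract y⌋₊) :
    |Int.fract x - Int.fract y| ≤ 1 / N := by
  have hNx : (0:ℝ) ≤ (N:ℝ) * Int.fract x :=
    mul_nonneg (Nat.cast_nonneg N) (Int.fract_nonneg x)
  have hNy : (0:ℝ) ≤ (N:ℝ) * Int.fract y :=
    mul_nonneg (Nat.cast_nonneg N) (Int.fract_nonneg y)
  have h1 : |(N:ℝ) * Int.fract x - (N:ℝ) * Int.fract y| < 1 :=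
    abs_lt_one_of_floor_eq hNx hNy h
  have hN' : (0:ℝ) < N := by exact_mod_cast hN
  rw [← mul_sub, abs_mul, abs_of_pos hN'] at h1
  rw [le_div_iff₀ hN']
  nlinarith [abs_nonneg (Int.fract x - Int.fract y)]

lemma dirichlet_linform {d : ℕ} (hd : 0 < d) (α : Fin d → ℝ) (Q : ℕ) (hQ : 1 ≤ Q) :
    ∃ nv : Fin d → ℤ, nv ≠ 0 ∧ (∀ j, (nv j).natAbs ≤ Q) ∧
      dist01 (∑ j, (nv j : ℝ) * α j) ≤ 2 / ((Q:ℝ)+1)^d := by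
  have hQ1d : 2 ≤ (Q+1)^d := by
    calc 2 = 2^1 := by norm_num
      _ ≤ (Q+1)^1 := by simpa using (by omega : 2 ≤ Q+1)
      _ ≤ (Q+1)^d := Nat.pow_le_pow_right (by omega) hd
  set N : ℕ := (Q+1)^d - 1 with hNdef
  have hN : 0 < N := by omega
  set A := Fintype.piFinset (fun _ : Fin d => Finset.Icc (0:ℤ) (Q:ℤ)) with hA
  have hcardA : A.card = (Q+1)^d := by
    rw [hA, Fintype.card_piFinset]
    simp only [Int.card_Icc]
    rw [Finset.prod_const, Finset.card_univ, Fintype.card_fin]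
    congr 1
  have hcard : (Finset.range N).card < A.card := by
    rw [hcardA, Finset.card_range]; omega
  have hmaps : ∀ n ∈ A,
      ⌊(N:ℝ) * Int.fract (∑ j, (n j:ℝ) * α j)⌋₊ ∈ Finset.range N := by
    intro n _
    rw [Finset.mem_range, Nat.floor_lt
      (mul_nonneg (Nat.cast_nonneg N) (Int.fract_nonneg _))]
    have := Int.fract_lt_one (∑ j, (n j:ℝ) * α j)
    have hN' : (0:ℝ) < N := by exact_mod_cast hN
    nlinarith [Int.fract_nonneg (∑ j, (n j:ℝ) * α j)]
  obtain ⟨n1, h1, n2, h2, hne, hfe⟩ :=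
    Finset.exists_ne_map_eq_of_card_lt_of_maps_to hcard hmaps
  refine ⟨n1 - n2, sub_ne_zero.mpr hne, ?_, ?_⟩
  · intro j
    have hj1 := Fintype.mem_piFinset.mp h1 j
    have hj2 := Fintype.mem_piFinset.mp h2 j
    rw [Finset.mem_Icc] at hj1 hj2
    simp only [Pi.sub_apply]
    omega
  · have hsub : (∑ j, (((n1 - n2) j : ℤ):ℝ) * α j)
        = (∑ j, (n1 j:ℝ) * α j) - (∑ j, (n2 j:ℝ) * α j) := by
      rw [← Finset.sum_sub_distrib]
      congr 1; funext j; simp only [Pi.sub_apply]; push_cast; ring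
    rw [hsub]
    have hfr := fract_close_of_nfloor_eq hN hfe
    have hd1 := dist01_sub_of_fract hfr
    refine hd1.trans ?_
    have hNR : ((N:ℝ)) = ((Q:ℝ)+1)^d - 1 := by
      rw [hNdef]; push_cast [Nat.cast_sub (by omega : 1 ≤ (Q+1)^d)]; ring_nf
    have h2Q : (2:ℝ) ≤ ((Q:ℝ)+1)^d := by exact_mod_cast hQ1d
    rw [hNR, div_le_div_iff₀ (by linarith) (by linarith)]
    nlinarith

lemma dirichlet_sim {d : ℕ} (hd : 0 < d) (α : Fin d → ℝ) (Q : ℕ) (hQ : 1 ≤ Q) :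
    ∃ q : ℕ, 1 ≤ q ∧ q ≤ Q^d ∧ ∀ j, dist01 ((q:ℝ) * α j) ≤ 1 / Q := by
  set B := Fintype.piFinset (fun _ : Fin d => Finset.range Q) with hB
  have hcardB : B.card = Q^d := by
    rw [hB, Fintype.card_piFinset]
    rw [Finset.prod_const, Finset.card_univ, Fintype.card_fin, Finset.card_range]
  have hcard : B.card < (Finset.range (Q^d + 1)).card := by
    rw [hcardB, Finset.card_range]; omega
  have hmaps : ∀ q ∈ Finset.range (Q^d + 1),
      (fun j => ⌊(Q:ℝ) * Int.fract ((q:ℝ) * α j)⌋₊) ∈ B := by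
    intro q _
    rw [hB, Fintype.mem_piFinset]
    intro j
    rw [Finset.mem_range, Nat.floor_lt
      (mul_nonneg (Nat.cast_nonneg Q) (Int.fract_nonneg _))]
    have := Int.fract_lt_one ((q:ℝ) * α j)
    have hQ' : (0:ℝ) < Q := by exact_mod_cast hQ
    nlinarith [Int.fract_nonneg ((q:ℝ) * α j)]
  obtain ⟨q1, h1, q2, h2, hne, hfe⟩ :=
    Finset.exists_ne_map_eq_of_card_lt_of_maps_to hcard hmaps
  rw [Finset.mem_range] at h1 h2
  have key : ∀ a b : ℕ, a < b → b ≤ Q^d →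
      (∀ j, ⌊(Q:ℝ) * Int.fract ((a:ℝ) * α j)⌋₊ = ⌊(Q:ℝ) * Int.fract ((b:ℝ) * α j)⌋₊) →
      ∃ q : ℕ, 1 ≤ q ∧ q ≤ Q^d ∧ ∀ j, dist01 ((q:ℝ) * α j) ≤ 1 / Q := by
    intro a b hab hb hj
    refine ⟨b - a, by omega, by omega, fun j => ?_⟩
    have hcast : ((b - a : ℕ) : ℝ) * α j = (b:ℝ) * α j - (a:ℝ) * α j := by
      push_cast [Nat.cast_sub hab.le]; ring
    rw [hcast]
    exact dist01_sub_of_fract (fract_close_of_nfloor_eq hQ ((hj j).symm))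
  have hfe' : ∀ j, ⌊(Q:ℝ) * Int.fract ((q1:ℝ) * α j)⌋₊ = ⌊(Q:ℝ) * Int.fract ((q2:ℝ) * α j)⌋₊ :=
    fun j => congrFun hfe j
  rcases lt_or_gt_of_ne hne with h | h
  · exact key q1 q2 h (by omega) hfe'
  · exact key q2 q1 h (by omega) (fun j => (hfe' j).symm)

lemma rpow_pow_cancel {q : ℕ} {d : ℕ} (hd : 0 < d) (hq : 1 ≤ q) :
    ((q:ℝ) ^ ((1:ℝ)/d)) ^ d = (q:ℝ) := by
  rw [← Real.rpow_natCast ((q:ℝ) ^ ((1:ℝ)/d)) d, ← Real.rpow_mul (Nat.cast_nonneg q)]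
  rw [one_div, inv_mul_cancel₀ (by exact_mod_cast hd.ne' : ((d:ℝ)) ≠ 0), Real.rpow_one]

lemma le_rpow_mul_of_pow_le {a b : ℝ} {q d : ℕ} (hd : 0 < d) (hq : 1 ≤ q)
    (ha : 0 ≤ a) (hb : 0 ≤ b) (h : a ^ d ≤ (q:ℝ) * b ^ d) :
    a ≤ (q:ℝ) ^ ((1:ℝ)/d) * b := by
  by_contra hc
  push_neg at hc
  have h0 : 0 ≤ (q:ℝ) ^ ((1:ℝ)/d) * b :=
    mul_nonneg (Real.rpow_nonneg (Nat.cast_nonneg q) _) hb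
  have := pow_lt_pow_left₀ hc h0 hd.ne'
  rw [mul_pow, rpow_pow_cancel hd hq] at this
  linarith

lemma one_le_rpow_nat {q d : ℕ} (hd : 0 < d) (hq : 1 ≤ q) :
    (1:ℝ) ≤ (q:ℝ) ^ ((1:ℝ)/d) := by
  calc (1:ℝ) = (1:ℝ) ^ ((1:ℝ)/d) := (Real.one_rpow _).symm
    _ ≤ (q:ℝ) ^ ((1:ℝ)/d) :=
      Real.rpow_le_rpow zero_le_one (by exact_mod_cast hq) (by positivity)

lemma sum_mul_abs_le {d : ℕ} (n : Fin (d+1) → ℤ) (e : Fin d → ℝ) {r : ℝ}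
    (hr : ∀ j, |e j| ≤ r) (hr0 : 0 ≤ r) :
    |∑ j, (n j.succ : ℝ) * e j| ≤ (d:ℝ) * (lfHeight d n : ℝ) * r := by
  calc |∑ j, (n j.succ : ℝ) * e j| ≤ ∑ j, |(n j.succ : ℝ) * e j| :=
        Finset.abs_sum_le_sum_abs _ _
    _ ≤ ∑ _j : Fin d, (lfHeight d n : ℝ) * r := by
        refine Finset.sum_le_sum fun j _ => ?_
        rw [abs_mul]
        have h1 : |(n j.succ : ℝ)| ≤ (lfHeight d n : ℝ) := by
          rw [← Int.cast_abs, Int.abs_eq_natAbs]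
          have : (n j.succ).natAbs ≤ lfHeight d n :=
            Finset.le_sup (f := fun j : Fin d => (n j.succ).natAbs) (Finset.mem_univ j)
          exact_mod_cast this
        exact mul_le_mul h1 (hr j) (abs_nonneg _) (Nat.cast_nonneg _)
    _ = (d:ℝ) * (lfHeight d n : ℝ) * r := by
        rw [Finset.sum_const, Finset.card_univ, Fintype.card_fin, nsmul_eq_mul]; ring

lemma key_identity {d : ℕ} (α : Fin d → ℝ) (q : ℕ) (p : Fin d → ℤ) (n : Fin (d+1) → ℤ) :
    (((q:ℤ) * n 0 + ∑ j, n j.succ * p j : ℤ) : ℝ)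
      = (q:ℝ) * ((n 0 : ℝ) + ∑ j, (n j.succ : ℝ) * α j)
        - ∑ j, (n j.succ : ℝ) * ((q:ℝ) * α j - (p j : ℝ)) := by
  push_cast
  rw [mul_add, Finset.mul_sum]
  have hs : ∑ j : Fin d, (q:ℝ) * ((n j.succ : ℝ) * α j)
      - ∑ j : Fin d, (n j.succ : ℝ) * ((q:ℝ) * α j - (p j : ℝ))
      = ∑ j : Fin d, (n j.succ : ℝ) * (p j : ℝ) := by
    rw [← Finset.sum_sub_distrib]
    exact Finset.sum_congr rfl (fun j _ => by ring)
  linarith [hs]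

lemma lf_upper_bound {d : ℕ} (hd : 0 < d) (α : Fin d → ℝ) (m : ℕ → Fin (d + 1) → ℤ)
    (hm : IsLinFormBestApprox d α m) (ν : ℕ) :
    lfValue d α (m ν) * ((lfHeight d (m (ν+1)) : ℝ))^d ≤ lfValue d α (m 0) + 2 := by
  obtain ⟨hMmono, hLanti, _, hdom⟩ := hm
  have hL0 : 0 ≤ lfValue d α (m 0) := abs_nonneg _
  have hMν : ν + 1 ≤ lfHeight d (m (ν+1)) := hMmono.le_apply
  set M : ℕ := lfHeight d (m (ν+1)) with hMdef
  rcases (show M = 1 ∨ 2 ≤ M by omega) with hM1 | hM2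
  · -- then ν = 0
    have hν0 : ν = 0 := by omega
    subst hν0
    rw [hM1]
    simp only [Nat.cast_one, one_pow, mul_one]
    linarith
  · set Q : ℕ := M - 1 with hQdef
    have hQ1 : 1 ≤ Q := by omega
    obtain ⟨nv, hnv0, hnvH, hnvV⟩ := dirichlet_linform hd α Q hQ1
    set x : ℝ := ∑ j, (nv j : ℝ) * α j with hxdef
    set nv' : Fin (d+1) → ℤ := Fin.cons (-(round x)) nv with hnv'def
    have htail : (fun j : Fin d => nv' j.succ) = nv := by
      funext j; rw [hnv'def, Fin.cons_succ]
    have htail0 : (fun j : Fin d => nv' j.succ) ≠ 0 := by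
      rw [htail]; exact hnv0
    have hH' : lfHeight d nv' ≤ Q := by
      unfold lfHeight
      refine Finset.sup_le fun j _ => ?_
      rw [hnv'def, Fin.cons_succ]
      exact hnvH j
    have hV' : lfValue d α nv' = dist01 x := by
      unfold lfValue dist01
      have h0 : nv' 0 = -(round x) := by rw [hnv'def, Fin.cons_zero]
      have hs : ∑ j, (nv' j.succ : ℝ) * α j = x := by
        rw [hxdef]
        exact Finset.sum_congr rfl fun j _ => by rw [hnv'def, Fin.cons_succ]
      rw [h0, hs]
      push_cast
      ring_nf
    obtain ⟨μ, hμM, hμL⟩ := hdom nv' htail0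
    have hμν : μ ≤ ν := by
      by_contra hc
      push_neg at hc
      have := hMmono.monotone (show ν + 1 ≤ μ by omega)
      omega
    have h1 : lfValue d α (m ν) ≤ lfValue d α (m μ) := hLanti.antitone hμν
    have h2 : lfValue d α (m ν) ≤ 2 / ((Q:ℝ)+1)^d := by
      refine h1.trans (hμL.trans ?_)
      rw [hV']
      exact hnvV
    have hQM : ((Q:ℝ)+1) = (M:ℝ) := by
      push_cast [hQdef, Nat.cast_sub (show 1 ≤ M by omega)]
      ring
    rw [hQM] at h2
    have hMpos : (0:ℝ) < (M:ℝ)^d := by positivity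
    calc lfValue d α (m ν) * ((M:ℕ):ℝ)^d ≤ (2 / (M:ℝ)^d) * (M:ℝ)^d := by
          exact mul_le_mul_of_nonneg_right h2 hMpos.le
      _ = 2 := by field_simp
      _ ≤ lfValue d α (m 0) + 2 := by linarith

lemma rpow_inv_pow {d : ℕ} (hd : 0 < d) {X : ℝ} (hX : 0 ≤ X) :
    (X ^ ((1:ℝ)/d)) ^ d = X := by
  rw [← Real.rpow_natCast (X ^ ((1:ℝ)/d)) d, ← Real.rpow_mul hX,
    one_div, inv_mul_cancel₀ (by exact_mod_cast hd.ne' : ((d:ℝ)) ≠ 0), Real.rpow_one]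

lemma le_rpow_inv_of_pow_le {d : ℕ} (hd : 0 < d) {a X : ℝ} (ha : 0 ≤ a) (hX : 0 ≤ X)
    (h : a ^ d ≤ X) : a ≤ X ^ ((1:ℝ)/d) := by
  by_contra hc
  push_neg at hc
  have h0 : 0 ≤ X ^ ((1:ℝ)/d) := Real.rpow_nonneg hX _
  have := pow_lt_pow_left₀ hc h0 hd.ne'
  rw [rpow_inv_pow hd hX] at this
  linarith

lemma int_eq_zero_of_abs_cast_lt_one {I : ℤ} (h : |(I:ℝ)| < 1) : I = 0 := by
  by_contra hI
  have : (1:ℤ) ≤ |I| := Int.one_le_abs hI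
  have : (1:ℝ) ≤ |(I:ℝ)| := by
    rw [← Int.cast_abs]; exact_mod_cast this
  linarith

lemma forward_lower_bound {d : ℕ} (hd : 0 < d) (α : Fin d → ℝ) (m : ℕ → Fin (d + 1) → ℤ)
    (hm : IsLinFormBestApprox d α m) {c₀ : ℝ} (hc₀ : 0 < c₀)
    (hBA : ∀ q : ℕ, 0 < q → c₀ ≤ (q : ℝ) ^ ((1 : ℝ) / d) * simErr d α q) (ν : ℕ) :
    min (1/(4*(8*(d:ℝ))^d)) (c₀^(d*d) / (4 * 2^d * ((2:ℝ)^(d+2)*(d:ℝ))^d))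
      ≤ lfValue d α (m (ν+1)) * ((lfHeight d (m (ν+1)) : ℝ))^d := by
  have hLanti := hm.2.1
  set L : ℝ := lfValue d α (m (ν+1)) with hLdef
  set M : ℕ := lfHeight d (m (ν+1)) with hMdef
  have hdR : (0:ℝ) < d := by exact_mod_cast hd
  have hM1 : 1 ≤ M := by
    have h : ν + 1 ≤ (fun ν => lfHeight d (m ν)) (ν+1) := hm.1.le_apply
    simp only at h
    omega
  have hMR : (1:ℝ) ≤ (M:ℝ) := by exact_mod_cast hM1
  have hLpos : 0 < L := by
    have h1 : lfValue d α (m (ν+2)) < L := hLanti (by omega)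
    exact lt_of_le_of_lt (abs_nonneg _) h1
  by_cases hcase : 1/(4*((8*(d:ℝ)*(M:ℝ)))^d) ≤ L
  · refine le_trans (min_le_left _ _) ?_
    have hexp : ((8*(d:ℝ)*(M:ℝ)))^d = (8*(d:ℝ))^d * (M:ℝ)^d := by
      rw [← mul_pow]
    have hpos1 : (0:ℝ) < (8*(d:ℝ))^d := by positivity
    have hpos2 : (0:ℝ) < (M:ℝ)^d := by positivity
    rw [hexp] at hcase
    rw [div_le_iff₀ (by positivity)] at hcase ⊢
    calc (1:ℝ) ≤ L * (4 * ((8*(d:ℝ))^d * (M:ℝ)^d)) := by linarith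
      _ = L * (M:ℝ)^d * (4 * (8*(d:ℝ))^d) := by ring
  · push_neg at hcase
    set X : ℝ := 1/(4*L) with hXdef
    have hXpos : 0 < X := by positivity
    set Q : ℕ := ⌊X ^ ((1:ℝ)/d)⌋₊ with hQdef
    have hXr_nonneg : 0 ≤ X ^ ((1:ℝ)/d) := Real.rpow_nonneg hXpos.le _
    have hQle : (Q:ℝ)^d ≤ X := by
      have h1 : (Q:ℝ) ≤ X ^ ((1:ℝ)/d) := Nat.floor_le hXr_nonneg
      calc (Q:ℝ)^d ≤ (X ^ ((1:ℝ)/d))^d := pow_le_pow_left₀ (Nat.cast_nonneg Q) h1 d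
        _ = X := rpow_inv_pow hd hXpos.le
    have hQge : 8*d*M ≤ Q := by
      rw [hQdef]
      refine Nat.le_floor ?_
      refine le_rpow_inv_of_pow_le hd (Nat.cast_nonneg _) hXpos.le ?_
      have h1 : ((8*d*M:ℕ):ℝ) = 8*(d:ℝ)*(M:ℝ) := by push_cast; ring
      rw [h1, hXdef, le_div_iff₀ (by positivity)]
      rw [lt_div_iff₀ (by positivity)] at hcase
      nlinarith [hcase]
    have hQ1 : 1 ≤ Q := by
      have h8 : 0 < 8*d*M := by positivity
      omega
    have hQX : X ≤ ((Q:ℝ)+1)^d := by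
      have h1 : X ^ ((1:ℝ)/d) < (Q:ℝ) + 1 := Nat.lt_floor_add_one _
      calc X = (X ^ ((1:ℝ)/d))^d := (rpow_inv_pow hd hXpos.le).symm
        _ ≤ ((Q:ℝ)+1)^d := pow_le_pow_left₀ hXr_nonneg h1.le d
    obtain ⟨q, hq1, hqQ, hqdist⟩ := dirichlet_sim hd α Q hQ1
    set r : ℝ := simErr d α q with hrdef
    have hrle : r ≤ 1/Q := simErr_le hd α q hqdist
    have hrpos : 0 ≤ r := simErr_nonneg hd α q
    set n := m (ν+1) with hndef
    set p : Fin d → ℤ := fun j => round ((q:ℝ) * α j) with hpdef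
    set E : ℝ := ∑ j, (n j.succ : ℝ) * ((q:ℝ) * α j - (p j : ℝ)) with hEdef
    set I : ℤ := (q:ℤ) * n 0 + ∑ j, n j.succ * p j with hIdef
    have hkey : (I:ℝ) = (q:ℝ) * ((n 0 : ℝ) + ∑ j, (n j.succ : ℝ) * α j) - E :=
      key_identity α q p n
    have heabs : ∀ j, |(q:ℝ) * α j - (p j : ℝ)| ≤ r := fun j => le_simErr α q j
    have hEbound : |E| ≤ (d:ℝ) * (M:ℝ) * r := sum_mul_abs_le n _ heabs hrpos
    have hQpos : (0:ℝ) < Q := by exact_mod_cast hQ1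
    have hQR : 8*(d:ℝ)*(M:ℝ) ≤ (Q:ℝ) := by exact_mod_cast hQge
    have hdM0 : (0:ℝ) < (d:ℝ)*(M:ℝ) := by positivity
    have hr1Q : r * (Q:ℝ) ≤ 1 := (le_div_iff₀ hQpos).mp hrle
    have hE8 : |E| ≤ 1/8 := by
      refine hEbound.trans ?_
      -- d M r ≤ 1/8 : 8 d M r ≤ 8 d M / Q ... use r Q ≤ 1 and Q ≥ 8dM
      nlinarith [hrpos, hr1Q, hQR]
    have hLt : |(q:ℝ) * ((n 0 : ℝ) + ∑ j, (n j.succ : ℝ) * α j)| = (q:ℝ) * L := by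
      rw [abs_mul, Nat.abs_cast]
      rfl
    have hqX : (q:ℝ) ≤ X := by
      have h1 : (q:ℝ) ≤ (Q:ℝ)^d := by exact_mod_cast hqQ
      linarith [hQle]
    have hXL : X * L = 1/4 := by
      rw [hXdef]; field_simp
    have hqL : (q:ℝ) * L ≤ 1/4 := by
      have := mul_le_mul_of_nonneg_right hqX hLpos.le
      linarith [hXL]
    have hI0 : I = 0 := by
      refine int_eq_zero_of_abs_cast_lt_one ?_
      rw [hkey]
      calc |(q:ℝ) * ((n 0 : ℝ) + ∑ j, (n j.succ : ℝ) * α j) - E|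
          ≤ |(q:ℝ) * ((n 0 : ℝ) + ∑ j, (n j.succ : ℝ) * α j)| + |E| := abs_sub _ _
        _ = (q:ℝ) * L + |E| := by rw [hLt]
        _ < 1 := by linarith
    have hqLE : (q:ℝ) * L = |E| := by
      have h0 : (q:ℝ) * ((n 0 : ℝ) + ∑ j, (n j.succ : ℝ) * α j) = E := by
        rw [hI0] at hkey
        push_cast at hkey
        linarith
      rw [← hLt, h0]
    have hqr : c₀ ^ d ≤ (q:ℝ) * r^d := by
      have h1 := hBA q hq1
      calc c₀ ^ d ≤ ((q:ℝ) ^ ((1:ℝ)/d) * r)^d := pow_le_pow_left₀ hc₀.le h1 d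
        _ = (q:ℝ) * r^d := by rw [mul_pow, rpow_pow_cancel hd hq1]
    have hqLr : (q:ℝ) * L ≤ (d:ℝ) * (M:ℝ) * r := hqLE ▸ hEbound
    have hrQnn : (0:ℝ) ≤ r * Q := by positivity
    have hchain : c₀ ^ d * (L * (Q:ℝ)^(d+1)) ≤ (d:ℝ) * (M:ℝ) := by
      have hA : c₀^d * (L * (Q:ℝ)^(d+1)) ≤ ((q:ℝ) * r^d) * (L * (Q:ℝ)^(d+1)) :=
        mul_le_mul_of_nonneg_right hqr (by positivity)
      have hB : ((q:ℝ)*r^d) * (L*(Q:ℝ)^(d+1)) = ((q:ℝ)*L) * ((r*(Q:ℝ))^d * (Q:ℝ)) := by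
        rw [mul_pow, pow_succ]
        ring
      have hC : ((q:ℝ)*L) * ((r*(Q:ℝ))^d * (Q:ℝ)) ≤ ((d:ℝ)*(M:ℝ)*r) * ((r*(Q:ℝ))^d * (Q:ℝ)) :=
        mul_le_mul_of_nonneg_right hqLr (by positivity)
      have hD : ((d:ℝ)*(M:ℝ)*r) * ((r*(Q:ℝ))^d * (Q:ℝ)) = (d:ℝ)*(M:ℝ) * ((r*(Q:ℝ))^(d+1)) := by
        rw [pow_succ]
        ring
      have hE2 : (r*(Q:ℝ))^(d+1) ≤ 1 := pow_le_one₀ hrQnn hr1Q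
      have hF : (d:ℝ)*(M:ℝ) * ((r*(Q:ℝ))^(d+1)) ≤ (d:ℝ)*(M:ℝ) :=
        mul_le_of_le_one_right hdM0.le hE2
      calc c₀^d * (L*(Q:ℝ)^(d+1)) ≤ ((q:ℝ)*r^d)*(L*(Q:ℝ)^(d+1)) := hA
        _ = ((q:ℝ)*L) * ((r*(Q:ℝ))^d * (Q:ℝ)) := hB
        _ ≤ ((d:ℝ)*(M:ℝ)*r) * ((r*(Q:ℝ))^d * (Q:ℝ)) := hC
        _ = (d:ℝ)*(M:ℝ) * ((r*(Q:ℝ))^(d+1)) := hD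
        _ ≤ (d:ℝ)*(M:ℝ) := hF
    have hLQd : 1/(4*2^d) ≤ L * (Q:ℝ)^d := by
      have hQ1R : (1:ℝ) ≤ (Q:ℝ) := by exact_mod_cast hQ1
      have h1 : ((Q:ℝ)+1)^d ≤ (2*(Q:ℝ))^d :=
        pow_le_pow_left₀ (by positivity) (by linarith) d
      have h2 : X ≤ 2^d * (Q:ℝ)^d := by
        rw [mul_pow] at h1
        linarith [hQX]
      rw [hXdef, div_le_iff₀ (by positivity)] at h2
      rw [div_le_iff₀ (by positivity)]
      calc (1:ℝ) ≤ 2^d*(Q:ℝ)^d*(4*L) := h2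
        _ = L*(Q:ℝ)^d*(4*2^d) := by ring
    have hc0d : (0:ℝ) < c₀^d := by positivity
    set B : ℝ := 4*2^d*(d:ℝ)*(M:ℝ)/c₀^d with hBdef
    have hBpos : 0 < B := by positivity
    have hQbound : (Q:ℝ) ≤ B := by
      rw [hBdef, le_div_iff₀ hc0d]
      -- Q c₀^d ≤ 4·2^d·d·M ; from hchain: c₀^d L Q^d Q ≤ dM and L Q^d ≥ 1/(4·2^d)
      have h1 : c₀^d * (L * (Q:ℝ)^d) * (Q:ℝ) ≤ (d:ℝ)*(M:ℝ) := by
        calc c₀^d * (L * (Q:ℝ)^d) * (Q:ℝ) = c₀ ^ d * (L * (Q:ℝ)^(d+1)) := by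
              rw [pow_succ]; ring
          _ ≤ (d:ℝ)*(M:ℝ) := hchain
      have h2d : (0:ℝ) < (2:ℝ)^d := by positivity
      have h3 := mul_le_mul_of_nonneg_right hLQd (mul_nonneg hc0d.le hQpos.le)
      have h4 : L*(Q:ℝ)^d * (c₀^d*(Q:ℝ)) = c₀^d * (L * (Q:ℝ)^d) * (Q:ℝ) := by ring
      rw [h4] at h3
      have h5 : 1/(4*2^d) * (c₀^d*(Q:ℝ)) ≤ (d:ℝ)*(M:ℝ) := le_trans h3 h1
      rw [div_mul_eq_mul_div, one_mul, div_le_iff₀ (by positivity)] at h5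
      linarith [h5]
    refine le_trans (min_le_right _ _) ?_
    have hQB : (Q:ℝ)^d ≤ B^d := pow_le_pow_left₀ (Nat.cast_nonneg Q) hQbound d
    have h5 : 1/(4*2^d) ≤ L * B^d :=
      le_trans hLQd (mul_le_mul_of_nonneg_left hQB hLpos.le)
    have hBd : B^d = (4*2^d*(d:ℝ))^d * (M:ℝ)^d / c₀^(d*d) := by
      rw [hBdef, div_pow, ← pow_mul]
      congr 1
      rw [← mul_pow]
    have hct : ((2:ℝ)^(d+2)*(d:ℝ))^d = (4*2^d*(d:ℝ))^d := by
      congr 1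
      rw [pow_add]
      ring
    rw [hct]
    rw [hBd] at h5
    have hpdd : (0:ℝ) < c₀^(d*d) := by positivity
    have h6 : c₀^(d*d) ≤ L * ((4*2^d*(d:ℝ))^d * (M:ℝ)^d) * (4*2^d) := by
      have h7 := mul_le_mul_of_nonneg_right h5
        (le_of_lt (show (0:ℝ) < (4*2^d)*c₀^(d*d) by positivity))
      calc c₀^(d*d) = 1/(4*2^d) * ((4*2^d)*c₀^(d*d)) := by field_simp
        _ ≤ (L * ((4*2^d*(d:ℝ))^d * (M:ℝ)^d / c₀^(d*d))) * ((4*2^d)*c₀^(d*d)) := h7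
        _ = L * ((4*2^d*(d:ℝ))^d * (M:ℝ)^d) * (4*2^d) := by
            field_simp
    rw [div_le_iff₀ (by positivity)]
    calc c₀^(d*d) ≤ L * ((4*2^d*(d:ℝ))^d * (M:ℝ)^d) * (4*2^d) := h6
      _ = L * (M:ℝ)^d * (4 * 2^d * (4*2^d*(d:ℝ))^d) := by ring

lemma forward_dir {d : ℕ} (hd : 0 < d) (α : Fin d → ℝ) (m : ℕ → Fin (d + 1) → ℤ)
    (hm : IsLinFormBestApprox d α m) (hBA : IsBadlyApprox d α) :
    ∃ c : ℝ, 0 < c ∧ ∀ ν : ℕ, c ≤ lfValue d α (m (ν + 1)) / lfValue d α (m ν) := by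
  obtain ⟨c₀, hc₀, hB⟩ := hBA
  have hdR : (0:ℝ) < d := by exact_mod_cast hd
  set γ : ℝ := min (1/(4*(8*(d:ℝ))^d)) (c₀^(d*d) / (4 * 2^d * ((2:ℝ)^(d+2)*(d:ℝ))^d))
    with hγdef
  have hγpos : 0 < γ := lt_min (by positivity) (by positivity)
  set K : ℝ := lfValue d α (m 0) + 2 with hKdef
  have hKpos : 0 < K := by
    have := abs_nonneg ((m 0 0 : ℝ) + ∑ j, (m 0 j.succ : ℝ) * α j)
    rw [hKdef]
    unfold lfValue
    linarith
  refine ⟨γ / K, by positivity, fun ν => ?_⟩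
  have hLpos : 0 < lfValue d α (m ν) := by
    have h1 : lfValue d α (m (ν+1)) < lfValue d α (m ν) := hm.2.1 (by omega)
    exact lt_of_le_of_lt (abs_nonneg _) h1
  have hLpos1 : 0 ≤ lfValue d α (m (ν+1)) := abs_nonneg _
  have h1 := forward_lower_bound hd α m hm hc₀ hB ν
  have h2 := lf_upper_bound hd α m hm ν
  rw [div_le_div_iff₀ hKpos hLpos]
  have hMd : (0:ℝ) < ((lfHeight d (m (ν+1)) : ℝ))^d := by
    have hM1 : 1 ≤ lfHeight d (m (ν+1)) := by
      have h : ν + 1 ≤ (fun ν => lfHeight d (m ν)) (ν+1) := hm.1.le_apply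
      simp only at h
      omega
    have : (1:ℝ) ≤ (lfHeight d (m (ν+1)) : ℝ) := by exact_mod_cast hM1
    positivity
  rw [← hγdef] at h1
  rw [← hKdef] at h2
  nlinarith [h1, h2, hLpos, hLpos1, hMd]

lemma converse_dir {d : ℕ} (hd : 0 < d) (α : Fin d → ℝ)
    (hli : LinearIndependent ℚ (Fin.cons 1 α : Fin (d + 1) → ℝ))
    (m : ℕ → Fin (d + 1) → ℤ) (hm : IsLinFormBestApprox d α m) {c : ℝ}
    (hc : 0 < c) (hc1 : c ≤ 1)
    (hrat : ∀ ν : ℕ, c ≤ lfValue d α (m (ν + 1)) / lfValue d α (m ν)) :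
    IsBadlyApprox d α := by
  have hdR : (0:ℝ) < d := by exact_mod_cast hd
  set L : ℕ → ℝ := fun ν => lfValue d α (m ν) with hLdef
  set M : ℕ → ℕ := fun ν => lfHeight d (m ν) with hMdef
  have hLpos : ∀ μ, 0 < L μ := by
    intro μ
    have h1 : L (μ+1) < L μ := hm.2.1 (by omega)
    exact lt_of_le_of_lt (abs_nonneg _) h1
  have hMmono : Monotone M := hm.1.monotone
  have hMle : ∀ k, k ≤ M k := fun k => hm.1.le_apply
  set K : ℝ := L 0 + 2 with hKdef
  have hK2 : 2 ≤ K := by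
    have := (hLpos 0).le
    rw [hKdef]; linarith
  have hKpos : 0 < K := by linarith
  have hC : ∀ ν, L ν * ((M (ν+1):ℝ))^d ≤ K := fun ν => lf_upper_bound hd α m hm ν
  have hrat' : ∀ μ, c * L μ ≤ L (μ+1) := by
    intro μ
    have h := hrat μ
    rw [le_div_iff₀ (hLpos μ)] at h
    linarith [h]
  -- constants
  set M0 : ℝ := max ((M 0 : ℕ) : ℝ) 1 with hM0def
  have hM0pos : (0:ℝ) < M0 := lt_of_lt_of_le one_pos (le_max_right _ _)
  set c1 : ℝ := 1/(2*(d:ℝ)*M0) with hc1def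
  set c2 : ℝ := c/(2*(d:ℝ)*(2*K)) with hc2def
  set c3 : ℝ := L 0/((d:ℝ)*M0) with hc3def
  have hc1pos : 0 < c1 := by rw [hc1def]; positivity
  have hc2pos : 0 < c2 := by rw [hc2def]; positivity
  have hc3pos : 0 < c3 := by rw [hc3def]; exact div_pos (hLpos 0) (by positivity)
  refine ⟨min c1 (min c2 c3), lt_min hc1pos (lt_min hc2pos hc3pos), fun q hq => ?_⟩
  set r : ℝ := simErr d α q with hrdef
  have hrpos : 0 < r :=
    lt_of_lt_of_le (dist01_pos_of_li hli ⟨0, hd⟩ q hq) (le_simErr α q ⟨0, hd⟩)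
  have hq1R : (1:ℝ) ≤ (q:ℝ) := by exact_mod_cast hq
  have hqr1 : (1:ℝ) ≤ (q:ℝ) ^ ((1:ℝ)/d) := one_le_rpow_nat hd hq
  set X : ℝ := 1/(2*(d:ℝ)*r) with hXdef
  have hXpos : 0 < X := by rw [hXdef]; positivity
  by_cases hcase : (M 0 : ℝ) ≤ X
  · -- there is a maximal ν with M ν ≤ X
    set S : Set ℕ := {ν | ((M ν : ℕ) : ℝ) ≤ X} with hSdef
    have hS0 : 0 ∈ S := hcase
    have hSbdd : BddAbove S := by
      refine ⟨⌊X⌋₊, fun k hk => ?_⟩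
      have h1 : ((k:ℕ):ℝ) ≤ X := le_trans (by exact_mod_cast hMle k) hk
      exact Nat.le_floor h1
    set ν : ℕ := sSup S with hνdef
    have hνmem : ν ∈ S := Nat.sSup_mem ⟨0, hS0⟩ hSbdd
    have hνmax : X < ((M (ν+1) : ℕ) : ℝ) := by
      by_contra hcon
      push_neg at hcon
      have : ν + 1 ∈ S := hcon
      have := le_csSup hSbdd this
      omega
    set p : Fin d → ℤ := fun j => round ((q:ℝ) * α j) with hpdef
    set E : ℕ → ℝ := fun μ => ∑ j, ((m μ) j.succ : ℝ) * ((q:ℝ) * α j - (p j : ℝ))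
      with hEdef
    set I : ℕ → ℤ := fun μ => (q:ℤ) * (m μ) 0 + ∑ j, (m μ) j.succ * p j with hIdef
    have heabs : ∀ j, |(q:ℝ) * α j - (p j : ℝ)| ≤ r := fun j => le_simErr α q j
    have hEb : ∀ μ, |E μ| ≤ (d:ℝ) * ((M μ:ℕ):ℝ) * r := fun μ =>
      sum_mul_abs_le (m μ) _ heabs hrpos.le
    have hqLabs : ∀ μ, (q:ℝ) * L μ = |(I μ:ℝ) + E μ| := by
      intro μ
      have hk := key_identity α q p (m μ)
      have h2 : ((I μ:ℤ):ℝ) + E μ = (q:ℝ) * (((m μ) 0 : ℝ) + ∑ j, ((m μ) j.succ : ℝ) * α j) := by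
        rw [hIdef]
        simp only
        linarith [hk]
      rw [h2, abs_mul, Nat.abs_cast]
      rfl
    have hEhalf : ∀ μ, μ ≤ ν → |E μ| ≤ 1/2 := by
      intro μ hμ
      refine (hEb μ).trans ?_
      have h1 : ((M μ:ℕ):ℝ) ≤ ((M ν:ℕ):ℝ) := by exact_mod_cast hMmono hμ
      have h2 : ((M ν:ℕ):ℝ) ≤ X := hνmem
      have h3 : X * r = 1/(2*(d:ℝ)) := by
        rw [hXdef]; field_simp
      have h4 : (d:ℝ) * ((M μ:ℕ):ℝ) * r ≤ (d:ℝ) * X * r := by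
        have hXM : ((M μ:ℕ):ℝ) ≤ X := le_trans h1 h2
        nlinarith [hrpos, hdR, mul_nonneg (sub_nonneg.mpr hXM) (mul_nonneg hdR.le hrpos.le)]
      have h5 : (d:ℝ) * X * r = 1/2 := by
        rw [mul_assoc, h3]
        field_simp
      linarith
    have hne : ∀ μ, μ ≤ ν → I μ ≠ 0 → 1/2 ≤ (q:ℝ) * L μ := by
      intro μ hμ hI
      have h1 : (1:ℝ) ≤ |(I μ:ℝ)| := by
        have : (1:ℤ) ≤ |I μ| := Int.one_le_abs hI
        rw [← Int.cast_abs]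
        exact_mod_cast this
      have h2 := hEhalf μ hμ
      rw [hqLabs μ]
      have := abs_add_le (I μ:ℝ) (E μ)
      have h3 : |(I μ:ℝ)| ≤ |(I μ:ℝ) + E μ| + |E μ| := by
        calc |(I μ:ℝ)| = |((I μ:ℝ) + E μ) + (-(E μ))| := by ring_nf
          _ ≤ |(I μ:ℝ) + E μ| + |(-(E μ))| := abs_add_le _ _
          _ = |(I μ:ℝ) + E μ| + |E μ| := by rw [abs_neg]
      linarith
    have heqz : ∀ μ, I μ = 0 → (q:ℝ) * L μ ≤ (d:ℝ) * ((M μ:ℕ):ℝ) * r := by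
      intro μ hI
      rw [hqLabs μ, hI]
      simpa using hEb μ
    by_cases hS' : ∃ μ, μ ≤ ν ∧ I μ ≠ 0
    · -- case with maximal nonzero index
      set S' : Set ℕ := {μ | μ ≤ ν ∧ I μ ≠ 0} with hS'def
      have hS'bdd : BddAbove S' := ⟨ν, fun k hk => hk.1⟩
      set μ' : ℕ := sSup S' with hμ'def
      have hμ'mem : μ' ∈ S' := Nat.sSup_mem hS' hS'bdd
      have hμ'ν : μ' ≤ ν := hμ'mem.1
      have hμ'ne : I μ' ≠ 0 := hμ'mem.2
      have hLμ' : 1/2 ≤ (q:ℝ) * L μ' := hne μ' hμ'ν hμ'ne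
      have hMbound : ((M (μ'+1):ℕ):ℝ)^d ≤ 2*(q:ℝ)*K := by
        have h1 := hC μ'
        -- L μ' ≥ 1/(2q)
        have h2 : 1/(2*(q:ℝ)) ≤ L μ' := by
          rw [div_le_iff₀ (by positivity)]
          linarith [hLμ']
        have h3 : 1/(2*(q:ℝ)) * ((M (μ'+1):ℕ):ℝ)^d ≤ K :=
          le_trans (mul_le_mul_of_nonneg_right h2 (by positivity)) h1
        rw [div_mul_eq_mul_div, one_mul, div_le_iff₀ (by positivity)] at h3
        linarith
      have hrstep : c/(2*(d:ℝ)*((M (μ'+1):ℕ):ℝ)) ≤ r := by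
        have hMp1 : (1:ℝ) ≤ ((M (μ'+1):ℕ):ℝ) := by
          have : 1 ≤ M (μ'+1) := by
            have := hMle (μ'+1)
            omega
          exact_mod_cast this
        have hMp0 : (0:ℝ) < ((M (μ'+1):ℕ):ℝ) := lt_of_lt_of_le one_pos hMp1
        rcases eq_or_lt_of_le hμ'ν with heq | hlt
        · -- μ' = ν : use maximality of ν
          have h1 : X < ((M (μ'+1):ℕ):ℝ) := by rw [heq]; exact hνmax
          rw [hXdef] at h1
          rw [div_le_iff₀ (by nlinarith [hMp0, hdR] : (0:ℝ) < 2*(d:ℝ)*((M (μ'+1):ℕ):ℝ))]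
          rw [div_lt_iff₀ (by nlinarith [hrpos, hdR] : (0:ℝ) < 2*(d:ℝ)*r)] at h1
          nlinarith [hrpos, hc1, hc]
        · -- μ' < ν : I (μ'+1) = 0
          have hI1 : I (μ'+1) = 0 := by
            by_contra hcon
            have : μ'+1 ∈ S' := ⟨by omega, hcon⟩
            have := le_csSup hS'bdd this
            omega
          have h1 := heqz (μ'+1) hI1
          have h2 := hrat' μ'
          -- c * L μ' ≤ L (μ'+1), q L(μ'+1) ≤ d M(μ'+1) r, q L μ' ≥ 1/2
          have h3 : c * ((q:ℝ) * L μ') ≤ (q:ℝ) * L (μ'+1) := by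
            nlinarith [hq1R, hLpos μ', h2]
          have h4 : c * (1/2) ≤ (d:ℝ) * ((M (μ'+1):ℕ):ℝ) * r := by
            nlinarith [hLμ', h3, h1, hc]
          rw [div_le_iff₀ (by positivity)]
          nlinarith [h4]
      -- conclude : c2^d ≤ q r^d
      refine le_trans (min_le_right _ _) (le_trans (min_le_left _ _) ?_)
      refine le_rpow_mul_of_pow_le hd hq hc2pos.le hrpos.le ?_
      set W : ℝ := ((M (μ'+1):ℕ):ℝ) with hWdef
      have hWpos : (0:ℝ) < W := by
        rw [hWdef]
        have : 1 ≤ M (μ'+1) := by have := hMle (μ'+1); omega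
        exact_mod_cast Nat.lt_of_lt_of_le Nat.zero_lt_one this
      have h5 : (c/(2*(d:ℝ)*W))^d ≤ r^d :=
        pow_le_pow_left₀ (by positivity) hrstep d
      have h6 : (c/(2*(d:ℝ)*W))^d = c^d / ((2*(d:ℝ))^d * W^d) := by
        rw [div_pow, mul_pow]
      have h7 : (q:ℝ) * (c^d / ((2*(d:ℝ))^d * W^d)) ≥ (q:ℝ) * (c^d / ((2*(d:ℝ))^d * (2*(q:ℝ)*K))) := by
        have hWd : W^d ≤ 2*(q:ℝ)*K := hMbound
        have h2qK : (0:ℝ) < 2*(q:ℝ)*K := by positivity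
        have hWdpos : (0:ℝ) < W^d := by positivity
        have : c^d / ((2*(d:ℝ))^d * (2*(q:ℝ)*K)) ≤ c^d / ((2*(d:ℝ))^d * W^d) := by
          refine div_le_div_of_nonneg_left (by positivity) (by positivity) ?_
          exact mul_le_mul_of_nonneg_left hWd (by positivity)
        nlinarith [this, hq1R]
      have h8 : (q:ℝ) * (c^d / ((2*(d:ℝ))^d * (2*(q:ℝ)*K))) = c^d / ((2*(d:ℝ))^d * (2*K)) := by
        field_simp
      have h9 : c2^d ≤ c^d / ((2*(d:ℝ))^d * (2*K)) := by
        rw [hc2def, div_pow, mul_pow]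
        refine div_le_div_of_nonneg_left (by positivity) (by positivity) ?_
        have h2K1 : (1:ℝ) ≤ 2*K := by linarith
        have : (2*K)^1 ≤ (2*K)^d := pow_le_pow_right₀ h2K1 hd
        calc (2*(d:ℝ))^d * (2*K) = (2*(d:ℝ))^d * (2*K)^1 := by ring
          _ ≤ (2*(d:ℝ))^d * (2*K)^d := by
            refine mul_le_mul_of_nonneg_left this (by positivity)
      calc c2^d ≤ c^d / ((2*(d:ℝ))^d * (2*K)) := h9
        _ = (q:ℝ) * (c^d / ((2*(d:ℝ))^d * (2*(q:ℝ)*K))) := h8.symm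
        _ ≤ (q:ℝ) * (c^d / ((2*(d:ℝ))^d * W^d)) := h7
        _ = (q:ℝ) * (c/(2*(d:ℝ)*W))^d := by rw [h6]
        _ ≤ (q:ℝ) * r^d := by
            refine mul_le_mul_of_nonneg_left ?_ (by positivity)
            exact h5
    · -- all I μ = 0 for μ ≤ ν ; in particular I 0 = 0
      push_neg at hS'
      have hI0 : I 0 = 0 := hS' 0 (Nat.zero_le ν)
      have hM0ge1 : 1 ≤ M 0 := by
        by_contra hcon
        push_neg at hcon
        have hM00 : M 0 = 0 := by omega
        -- all coordinates of the tail of m 0 vanish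
        have htail : ∀ j : Fin d, (m 0) j.succ = 0 := by
          intro j
          have h1 : ((m 0) j.succ).natAbs ≤ M 0 :=
            Finset.le_sup (f := fun j : Fin d => ((m 0) j.succ).natAbs) (Finset.mem_univ j)
          rw [hM00] at h1
          omega
        have hsum0 : (∑ j, (m 0) j.succ * p j) = 0 := by
          refine Finset.sum_eq_zero fun j _ => ?_
          rw [htail j, zero_mul]
        have hm00 : (m 0) 0 = 0 := by
          have := hI0
          rw [hIdef] at this
          simp only at this
          rw [hsum0, add_zero] at this
          have hqne : (q:ℤ) ≠ 0 := by exact_mod_cast hq.ne'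
          exact (mul_eq_zero.mp this).resolve_left hqne
        have hL00 : L 0 = 0 := by
          rw [hLdef]
          simp only
          unfold lfValue
          rw [hm00]
          have : (∑ j, ((m 0) j.succ : ℝ) * α j) = 0 := by
            refine Finset.sum_eq_zero fun j _ => ?_
            rw [htail j]
            simp
          rw [this]
          simp
        exact absurd hL00 (hLpos 0).ne'
      have hM0eq : M0 = ((M 0:ℕ):ℝ) := by
        rw [hM0def]
        have : (1:ℝ) ≤ ((M 0:ℕ):ℝ) := by exact_mod_cast hM0ge1
        exact max_eq_left this
      have h1 := heqz 0 hI0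
      -- q L 0 ≤ d M0 r  ⇒  r ≥ q L0/(d M0) ≥ L0/(d M0) = c3
      have h2 : c3 ≤ r := by
        rw [hc3def, hM0eq, div_le_iff₀ (by positivity : (0:ℝ) < (d:ℝ)*((M 0:ℕ):ℝ))]
        nlinarith [h1, hq1R, hLpos 0]
      refine le_trans (min_le_right _ _) (le_trans (min_le_right _ _) ?_)
      calc c3 ≤ r := h2
        _ = 1 * r := (one_mul r).symm
        _ ≤ (q:ℝ) ^ ((1:ℝ)/d) * r := mul_le_mul_of_nonneg_right hqr1 hrpos.le
  · -- M 0 > X : r is large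
    push_neg at hcase
    have hM0ge1 : 1 ≤ M 0 := by
      by_contra hcon
      push_neg at hcon
      have : M 0 = 0 := by omega
      rw [this] at hcase
      simp at hcase
      linarith [hXpos, hcase]
    have hM0eq : M0 = ((M 0:ℕ):ℝ) := by
      rw [hM0def]
      have : (1:ℝ) ≤ ((M 0:ℕ):ℝ) := by exact_mod_cast hM0ge1
      exact max_eq_left this
    have h1 : c1 ≤ r := by
      rw [hc1def, hM0eq, div_le_iff₀ (by positivity : (0:ℝ) < 2*(d:ℝ)*((M 0:ℕ):ℝ))]
      rw [hXdef] at hcase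
      rw [div_lt_iff₀ (by positivity)] at hcase
      nlinarith [hcase, hrpos]
    refine le_trans (min_le_left _ _) ?_
    calc c1 ≤ r := h1
      _ = 1 * r := (one_mul r).symm
      _ ≤ (q:ℝ) ^ ((1:ℝ)/d) * r := mul_le_mul_of_nonneg_right hqr1 hrpos.le

theorem badly_approx_iff_inf_ratio_linear_form_values_pos
    (d : ℕ) (α : Fin d → ℝ)
    (hli : LinearIndependent ℚ (Fin.cons 1 α : Fin (d + 1) → ℝ))
    (m : ℕ → Fin (d + 1) → ℤ) (hm : IsLinFormBestApprox d α m) :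
    IsBadlyApprox d α ↔
      ∃ c : ℝ, 0 < c ∧ ∀ ν : ℕ, c ≤ lfValue d α (m (ν + 1)) / lfValue d α (m ν) := by
  rcases Nat.eq_zero_or_pos d with hd0 | hd
  · exfalso
    subst hd0
    have h := hm.1 (show (0:ℕ) < 1 by norm_num)
    simp only [lfHeight, Finset.univ_eq_empty, Finset.sup_empty] at h
    exact absurd h (lt_irrefl _)
  · constructor
    · intro hBA
      exact forward_dir hd α m hm hBA
    · rintro ⟨c, hc, hrat⟩
      refine converse_dir hd α hli m hm (c := min c 1) (lt_min hc one_pos)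
        (min_le_right _ _) (fun ν => le_trans (min_le_left _ _) (hrat ν))
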